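/- Let (X, δ) be a bounded hyperconvex diversity with induced metric space (X, d). Then every nonempty admissible subset A of (X, d) has the fixed point property for nonexpansive self-mappings: every nonexpansive T : A → A (with respect to d) has a fixed point. -/

import Mathlib

/-!
Balls in a bounded hyperconvex diversity behave like a compact family: if every finite subfamily
of a family of balls `ball cᵢ rᵢ` satisfies `δ {cᵢ} ≤ ∑ rᵢ`, the balls have a common point. To see
this, apply hyperconvexity to `r Y = ∑ y ∈ Y, ρ y`, where `ρ c` is the infimum of the radii of the
balls centred at `c`. Consequently chains of nonempty admissible sets have nonempty intersection,
and Zorn's lemma yields a minimal nonempty `T`-invariant admissible set `B`. If `B` had two points,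
let `d > 0` be the supremum of `δ {x, y}` over `B`; the same compactness gives `r < d` such that
`C = B ∩ ⋂ x ∈ B, ball x r` is nonempty. Minimality applied to `B ∩ ball (T y) r` shows that `C` is
`T`-invariant, hence `C = B`, contradicting `r < d`. So `B` is a point, fixed by `T`.
-/

/-- A diversity on `X`: a real-valued function on finite subsets of `X` which is
nonnegative, vanishes exactly on sets of cardinality at most one, and satisfies the
triangle inequality `δ(A ∪ C) ≤ δ(A ∪ B) + δ(B ∪ C)` for nonempty `B`. -/
structure Diversity (X : Type*) [DecidableEq X] where
  delta : Finset X → ℝ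
  nonneg : ∀ A, 0 ≤ delta A
  eq_zero_iff : ∀ A, delta A = 0 ↔ A.card ≤ 1
  triangle : ∀ A B C : Finset X, B.Nonempty →
    delta (A ∪ C) ≤ delta (A ∪ B) + delta (B ∪ C)

namespace Diversity

variable {X : Type*} [DecidableEq X]

/-- A diversity is hyperconvex if for every `r : ⟨X⟩ → ℝ` with `r ∅ = 0` such that
`δ(⋃_{A ∈ 𝒜} A) ≤ ∑_{A ∈ 𝒜} r A` for every finite collection `𝒜` of finite subsets
of `X`, there is `z ∈ X` with `δ({z} ∪ Y) ≤ r Y` for all finite `Y ⊆ X`. -/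
def Hyperconvex (D : Diversity X) : Prop :=
  ∀ r : Finset X → ℝ, r ∅ = 0 →
    (∀ 𝒜 : Finset (Finset X), D.delta (𝒜.sup id) ≤ ∑ A ∈ 𝒜, r A) →
    ∃ z : X, ∀ Y : Finset X, D.delta (insert z Y) ≤ r Y

/-- A diversity is bounded if its values are uniformly bounded above. -/
def Bounded (D : Diversity X) : Prop :=
  ∃ M : ℝ, 0 ≤ M ∧ ∀ A : Finset X, D.delta A ≤ M

end Diversity

namespace Diversity

variable {X : Type*} [DecidableEq X]

/-- The closed ball of center `x` and radius `r` of the metric space induced by a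
diversity (`d(x, y) = δ {x, y}`). -/
def ball (D : Diversity X) (x : X) (r : ℝ) : Set X :=
  {y : X | D.delta {x, y} ≤ r}

/-- A subset of `X` is admissible (with respect to the metric induced by the diversity)
if it is an intersection of closed balls. -/
def IsAdmissible (D : Diversity X) (A : Set X) : Prop :=
  ∃ s : Set (X × ℝ), A = ⋂ p ∈ s, D.ball p.1 p.2

end Diversity

open Set Function

theorem Finset.le_sum_csInf {ι : Type*} [DecidableEq ι] (F : Finset ι) (S : ι → Set ℝ)
    (hS : ∀ i ∈ F, (S i).Nonempty) {a : ℝ}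
    (h : ∀ σ : ι → ℝ, (∀ i ∈ F, σ i ∈ S i) → a ≤ ∑ i ∈ F, σ i) :
    a ≤ ∑ i ∈ F, sInf (S i) := by
  induction F using Finset.induction_on generalizing a with
  | empty => simpa using h 0
  | insert j F hj ih =>
    have hle : a - ∑ i ∈ F, sInf (S i) ≤ sInf (S j) := by
      refine le_csInf (hS j (Finset.mem_insert_self j F)) fun v hv => ?_
      have := ih (fun i hi => hS i (Finset.mem_insert_of_mem hi)) (a := a - v) fun σ hσ => by
        have key := h (update σ j v) fun i hi => by
          rcases Finset.mem_insert.1 hi with rfl | hi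
          · simpa using hv
          · rw [update_of_ne (ne_of_mem_of_not_mem hi hj)]; exact hσ i hi
        rw [Finset.sum_insert hj, update_self, Finset.sum_update_of_notMem hj] at key
        linarith
      linarith
    rw [Finset.sum_insert hj]
    linarith

-- `r = d (1 - 1/N)` with `(N - 1) d ≥ M`: then `(n - 1) d ≤ n r` for `n ≤ N`
-- and `M ≤ N r ≤ n r` for `n ≥ N`.
lemma exists_nonneg_lt_forall_min_le_mul {d M : ℝ} (hd : 0 < d) (hM : 0 ≤ M) :
    ∃ r, 0 ≤ r ∧ r < d ∧ ∀ n : ℕ, min ((n - 1) * d) M ≤ n * r := by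
  set N : ℕ := ⌈M / d⌉₊ + 1
  have hN : (1 : ℝ) ≤ N := by simp [N]
  have hNM : M ≤ (N - 1) * d := by
    rw [← div_le_iff₀ hd]
    simpa [N] using Nat.le_ceil (M / d)
  have hdN : d / N ≤ d := div_le_self hd.le hN
  refine ⟨d - d / N, by linarith, by linarith [div_pos hd (by linarith : (0 : ℝ) < N)], fun n => ?_⟩
  have hNr : (N : ℝ) * (d - d / N) = (N - 1) * d := by field_simp
  rcases le_total (n : ℝ) N with hn | hn
  · refine (min_le_left _ _).trans ?_
    have : (n : ℝ) * (d / N) ≤ d := by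
      rw [mul_div_assoc', div_le_iff₀ (by linarith)]
      nlinarith
    nlinarith
  · refine (min_le_right _ _).trans ?_
    nlinarith

namespace Diversity

variable {X : Type*} [DecidableEq X] (D : Diversity X)

lemma delta_empty : D.delta ∅ = 0 := (D.eq_zero_iff ∅).2 (by simp)

lemma delta_singleton (x : X) : D.delta {x} = 0 := (D.eq_zero_iff {x}).2 (by simp)

lemma delta_pair_comm (x y : X) : D.delta {x, y} = D.delta {y, x} := by
  rw [Finset.pair_comm]

lemma delta_pair_eq_zero_iff {x y : X} : D.delta {x, y} = 0 ↔ x = y := by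
  rw [D.eq_zero_iff]
  constructor
  · intro h
    exact Finset.card_le_one.1 h x (by simp) y (by simp)
  · rintro rfl
    simp

lemma delta_le_delta_insert (S : Finset X) (x : X) : D.delta S ≤ D.delta (insert x S) := by
  simpa [D.delta_singleton] using D.triangle S {x} ∅ (Finset.singleton_nonempty x)

lemma delta_le_delta_union (S G : Finset X) : D.delta S ≤ D.delta (S ∪ G) := by
  induction G using Finset.induction_on with
  | empty => simp
  | insert x G _ ih =>
    rw [Finset.union_insert]
    exact ih.trans (D.delta_le_delta_insert _ x)

lemma delta_mono {S S' : Finset X} (h : S ⊆ S') : D.delta S ≤ D.delta S' := by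
  simpa [Finset.union_eq_right.2 h] using D.delta_le_delta_union S S'

lemma delta_union_le {F : Finset X} {w : X} (hw : w ∈ F) (G : Finset X) :
    D.delta (F ∪ G) ≤ D.delta F + ∑ x ∈ G, D.delta {w, x} := by
  induction G using Finset.induction_on with
  | empty => simp
  | insert a G ha ih =>
    have h := D.triangle (F ∪ G) {w} {a} (Finset.singleton_nonempty w)
    rw [Finset.union_singleton, Finset.union_singleton,
      Finset.insert_eq_of_mem (Finset.mem_union_left G hw), ← Finset.insert_eq] at h
    rw [Finset.union_insert, Finset.sum_insert ha]
    linarith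

lemma delta_le_sum_delta_pair (w : X) (S : Finset X) :
    D.delta S ≤ ∑ x ∈ S, D.delta {w, x} :=
  calc D.delta S ≤ D.delta ({w} ∪ S) := D.delta_mono Finset.subset_union_right
    _ ≤ D.delta {w} + ∑ x ∈ S, D.delta {w, x} := D.delta_union_le (Finset.mem_singleton_self w) S
    _ = ∑ x ∈ S, D.delta {w, x} := by rw [D.delta_singleton, zero_add]

lemma delta_le_card_sub_one_mul {F : Finset X} (hF : F.Nonempty) {d : ℝ}
    (hd : ∀ x ∈ F, ∀ y ∈ F, D.delta {x, y} ≤ d) : D.delta F ≤ (F.card - 1) * d := by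
  obtain ⟨w, hw⟩ := hF
  calc D.delta F = D.delta ({w} ∪ F.erase w) := by rw [← Finset.insert_eq, Finset.insert_erase hw]
    _ ≤ D.delta {w} + ∑ x ∈ F.erase w, D.delta {w, x} := D.delta_union_le (by simp) _
    _ ≤ 0 + ∑ _x ∈ F.erase w, d := by
      rw [D.delta_singleton]
      gcongr with x hx
      exact hd w hw x (Finset.mem_of_mem_erase hx)
    _ = (F.card - 1) * d := by
      rw [Finset.sum_const, Finset.card_erase_of_mem hw, nsmul_eq_mul,
        Nat.cast_sub (Finset.card_pos.2 ⟨w, hw⟩)]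
      simp

lemma mem_ball {x y : X} {r : ℝ} : y ∈ D.ball x r ↔ D.delta {x, y} ≤ r := Iff.rfl

lemma mem_ball_comm {x y : X} {r : ℝ} : y ∈ D.ball x r ↔ x ∈ D.ball y r := by
  rw [mem_ball, mem_ball, delta_pair_comm]

def IsCompatible (t : Set (X × ℝ)) : Prop :=
  ∀ P : Finset (X × ℝ), ↑P ⊆ t → D.delta (P.image Prod.fst) ≤ ∑ p ∈ P, p.2

lemma sum_delta_pair_image_fst_le {P : Finset (X × ℝ)} {w : X}
    (hw : ∀ p ∈ P, w ∈ D.ball p.1 p.2) :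
    ∑ x ∈ P.image Prod.fst, D.delta {w, x} ≤ ∑ p ∈ P, p.2 :=
  calc ∑ x ∈ P.image Prod.fst, D.delta {w, x} ≤ ∑ p ∈ P, D.delta {w, p.1} :=
        Finset.sum_image_le_of_nonneg fun _ _ => D.nonneg _
    _ ≤ ∑ p ∈ P, p.2 := Finset.sum_le_sum fun p hp => by
        rw [delta_pair_comm]; exact hw p hp

lemma isCompatible_of_finite_inter {t : Set (X × ℝ)}
    (h : ∀ P : Finset (X × ℝ), ↑P ⊆ t → ∃ w, ∀ p ∈ P, w ∈ D.ball p.1 p.2) :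
    D.IsCompatible t := fun P hP => by
  obtain ⟨w, hw⟩ := h P hP
  exact (D.delta_le_sum_delta_pair w _).trans (D.sum_delta_pair_image_fst_le hw)

lemma isCompatible_image_prodMk {B : Set X} {r : ℝ}
    (hr : ∀ F : Finset X, ↑F ⊆ B → D.delta F ≤ F.card * r) :
    D.IsCompatible ((fun x => (x, r)) '' B) := fun P hP => by
  have hP2 : ∀ p ∈ P, p.2 = r := fun p hp => by
    obtain ⟨x, -, hx⟩ := hP hp
    rw [← hx]
  have hcard : (P.image Prod.fst).card = P.card :=
    Finset.card_image_of_injOn fun p hp q hq h => Prod.ext h (by rw [hP2 p hp, hP2 q hq])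
  have hsub : ↑(P.image Prod.fst) ⊆ B := fun x hx => by
    obtain ⟨p, hp, rfl⟩ := Finset.mem_image.1 hx
    obtain ⟨y, hy, rfl⟩ := hP hp
    exact hy
  rw [Finset.sum_congr rfl hP2, Finset.sum_const, nsmul_eq_mul, ← hcard]
  exact hr _ hsub

variable {D}

theorem Hyperconvex.exists_forall_delta_pair_le (hH : D.Hyperconvex) {ρ : X → ℝ}
    (hρ : ∀ F : Finset X, D.delta F ≤ ∑ x ∈ F, ρ x) : ∃ z, ∀ c, D.delta {z, c} ≤ ρ c := by
  have hρ0 : ∀ x, 0 ≤ ρ x := fun x => by simpa [D.delta_singleton] using hρ {x}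
  have hsub : ∀ {S T : Finset X}, ∑ x ∈ S ∪ T, ρ x ≤ ∑ x ∈ S, ρ x + ∑ x ∈ T, ρ x :=
    fun {S T} => by
      rw [← Finset.sum_union_inter]
      exact le_add_of_nonneg_right (Finset.sum_nonneg fun x _ => hρ0 x)
  obtain ⟨z, hz⟩ := hH (fun Y => ∑ x ∈ Y, ρ x) Finset.sum_empty fun 𝒜 =>
    (hρ _).trans (Finset.apply_sup_le_sum (f := fun Y => ∑ x ∈ Y, ρ x) (s := id)
      Finset.sum_empty hsub 𝒜)
  exact ⟨z, fun c => by simpa using hz {c}⟩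

theorem Hyperconvex.nonempty_biInter_ball (hH : D.Hyperconvex) (hB : D.Bounded)
    {t : Set (X × ℝ)} (ht : D.IsCompatible t) : (⋂ p ∈ t, D.ball p.1 p.2).Nonempty := by
  classical
  obtain ⟨M, hM0, hM⟩ := hB
  have hrad : ∀ p ∈ t, 0 ≤ p.2 := fun p hp => by
    simpa [D.delta_singleton] using ht {p} (by simpa using hp)
  -- `M` stands in for the absence of a ball centred at `c`, keeping `sInf` off `∅`
  let R : X → Set ℝ := fun c => insert M {s | (c, s) ∈ t}
  have hR0 : ∀ c, ∀ s ∈ R c, 0 ≤ s := by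
    rintro c s (rfl | hs)
    exacts [hM0, hrad _ hs]
  have hρ : ∀ F : Finset X, D.delta F ≤ ∑ c ∈ F, sInf (R c) := fun F =>
    F.le_sum_csInf R (fun c _ => insert_nonempty _ _) fun σ hσ => by
      by_cases hσM : ∃ c ∈ F, σ c = M
      · obtain ⟨c, hc, hσc⟩ := hσM
        calc D.delta F ≤ σ c := hσc ▸ hM F
          _ ≤ ∑ c ∈ F, σ c := Finset.single_le_sum (fun i hi => hR0 i _ (hσ i hi)) hc
      · push Not at hσM
        have hσt : ∀ c ∈ F, (c, σ c) ∈ t := fun c hc => (hσ c hc).resolve_left (hσM c hc)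
        have h := ht (F.image fun c => (c, σ c)) (by simpa [Set.subset_def] using hσt)
        rw [Finset.image_image, Finset.sum_image fun x _ y _ h => congrArg Prod.fst h] at h
        simpa [Function.comp_def] using h
  obtain ⟨z, hz⟩ := hH.exists_forall_delta_pair_le hρ
  refine ⟨z, mem_iInter₂.2 fun p hp => ?_⟩
  rw [mem_ball, delta_pair_comm]
  exact (hz p.1).trans (csInf_le ⟨0, hR0 p.1⟩ (mem_insert_of_mem _ hp))

def enclosingBalls (D : Diversity X) (B : Set X) : Set (X × ℝ) := {p | B ⊆ D.ball p.1 p.2}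

lemma enclosingBalls_anti {B B' : Set X} (h : B ⊆ B') : D.enclosingBalls B' ⊆ D.enclosingBalls B :=
  fun _ hp => h.trans hp

lemma isAdmissible_iff {B : Set X} :
    D.IsAdmissible B ↔ ⋂ p ∈ D.enclosingBalls B, D.ball p.1 p.2 = B := by
  refine ⟨fun ⟨s, hs⟩ => subset_antisymm ?_ (subset_iInter₂ fun p hp => hp), fun h => ⟨_, h.symm⟩⟩
  calc ⋂ p ∈ D.enclosingBalls B, D.ball p.1 p.2 ⊆ ⋂ p ∈ s, D.ball p.1 p.2 :=
        biInter_subset_biInter_left fun p hp => by rw [hs]; exact biInter_subset_of_mem hp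
    _ = B := hs.symm

lemma sInter_eq_biInter_enclosingBalls {𝒞 : Set (Set X)} (h : ∀ B ∈ 𝒞, D.IsAdmissible B) :
    ⋂₀ 𝒞 = ⋂ p ∈ ⋃ B ∈ 𝒞, D.enclosingBalls B, D.ball p.1 p.2 := by
  simp only [biInter_iUnion, sInter_eq_biInter]
  exact iInter₂_congr fun B hB => (isAdmissible_iff.1 (h B hB)).symm

lemma IsAdmissible.sInter {𝒞 : Set (Set X)} (h : ∀ B ∈ 𝒞, D.IsAdmissible B) :
    D.IsAdmissible (⋂₀ 𝒞) :=
  ⟨_, sInter_eq_biInter_enclosingBalls h⟩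

lemma IsAdmissible.inter {A B : Set X} (hA : D.IsAdmissible A) (hB : D.IsAdmissible B) :
    D.IsAdmissible (A ∩ B) := by
  rw [← sInter_pair]
  exact IsAdmissible.sInter (by simp [hA, hB])

lemma IsAdmissible.biInter {ι : Type*} {s : Set ι} {f : ι → Set X}
    (h : ∀ i ∈ s, D.IsAdmissible (f i)) : D.IsAdmissible (⋂ i ∈ s, f i) := by
  rw [← sInter_image]
  exact IsAdmissible.sInter (forall_mem_image.2 h)

lemma isAdmissible_ball (x : X) (r : ℝ) : D.IsAdmissible (D.ball x r) :=
  ⟨{(x, r)}, by simp⟩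

lemma IsCompatible.enclosingBalls_union {t : Set (X × ℝ)} {B : Set X} (ht : D.IsCompatible t)
    (htB : ∀ p ∈ t, p.1 ∈ B) (hB : B.Nonempty) : D.IsCompatible (D.enclosingBalls B ∪ t) := by
  classical
  intro P hP
  set P₁ := P.filter (· ∉ t)
  set P₂ := P.filter (· ∈ t)
  have hP₁ : ∀ p ∈ P₁, B ⊆ D.ball p.1 p.2 := fun p hp => by
    obtain ⟨hpP, hpt⟩ := Finset.mem_filter.1 hp
    exact (hP hpP).resolve_right hpt
  -- a point of `B` that can be added to the centres of `P₂` at no cost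
  obtain ⟨w, hwB, hw⟩ : ∃ w ∈ B, D.delta (insert w (P₂.image Prod.fst)) ≤ ∑ p ∈ P₂, p.2 := by
    rcases (P₂.image Prod.fst).eq_empty_or_nonempty with h | ⟨w, hw⟩
    · obtain ⟨w, hwB⟩ := hB
      rw [Finset.image_eq_empty.1 h]
      exact ⟨w, hwB, by simp [D.delta_singleton]⟩
    · obtain ⟨p, hp, rfl⟩ := Finset.mem_image.1 hw
      refine ⟨p.1, htB p (Finset.mem_filter.1 hp).2, ?_⟩
      rw [Finset.insert_eq_of_mem hw]
      exact ht P₂ fun q hq => (Finset.mem_filter.1 hq).2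
  calc D.delta (P.image Prod.fst)
      ≤ D.delta (insert w (P₂.image Prod.fst) ∪ P₁.image Prod.fst) := by
        apply D.delta_mono
        rw [← Finset.filter_union_filter_not_eq (· ∈ t) P, Finset.image_union]
        exact Finset.union_subset_union (Finset.subset_insert _ _) subset_rfl
    _ ≤ D.delta (insert w (P₂.image Prod.fst)) + ∑ x ∈ P₁.image Prod.fst, D.delta {w, x} :=
        D.delta_union_le (Finset.mem_insert_self _ _) _
    _ ≤ ∑ p ∈ P₂, p.2 + ∑ p ∈ P₁, p.2 :=
        add_le_add hw (D.sum_delta_pair_image_fst_le fun p hp => hP₁ p hp hwB)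
    _ = ∑ p ∈ P, p.2 := Finset.sum_filter_add_sum_filter_not P (· ∈ t) _

theorem Hyperconvex.nonempty_sInter_of_isChain (hH : D.Hyperconvex) (hB : D.Bounded)
    {𝒞 : Set (Set X)} (hc : IsChain (· ⊆ ·) 𝒞) (h𝒞 : 𝒞.Nonempty)
    (hadm : ∀ B ∈ 𝒞, D.IsAdmissible B) (hne : ∀ B ∈ 𝒞, B.Nonempty) : (⋂₀ 𝒞).Nonempty := by
  rw [sInter_eq_biInter_enclosingBalls hadm]
  refine hH.nonempty_biInter_ball hB (D.isCompatible_of_finite_inter fun P hP => ?_)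
  have hdir : DirectedOn (fun B B' => D.enclosingBalls B ⊆ D.enclosingBalls B') 𝒞 :=
    fun B hB B' hB' => by
      rcases hc.total hB hB' with h | h
      exacts [⟨B, hB, subset_rfl, enclosingBalls_anti h⟩,
        ⟨B', hB', enclosingBalls_anti h, subset_rfl⟩]
  obtain ⟨B, hB𝒞, hPB⟩ := hdir.exists_mem_subset_of_finset_subset_biUnion h𝒞 hP
  obtain ⟨w, hw⟩ := hne B hB𝒞
  exact ⟨w, fun p hp => hPB hp hw⟩

theorem Hyperconvex.exists_lt_nonempty_inter_biInter_ball (hH : D.Hyperconvex)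
    (hB : D.Bounded) {B : Set X} (hadm : D.IsAdmissible B) (hne : B.Nonempty) {d : ℝ}
    (hd : 0 < d) (hpair : ∀ x ∈ B, ∀ y ∈ B, D.delta {x, y} ≤ d) :
    ∃ r < d, (B ∩ ⋂ x ∈ B, D.ball x r).Nonempty := by
  obtain ⟨M, hM0, hM⟩ := id hB
  obtain ⟨r, -, hrd, hr⟩ := exists_nonneg_lt_forall_min_le_mul hd hM0
  have hF : ∀ F : Finset X, ↑F ⊆ B → D.delta F ≤ F.card * r := fun F hFB => by
    rcases F.eq_empty_or_nonempty with rfl | hF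
    · simp [D.delta_empty]
    · refine (le_min (D.delta_le_card_sub_one_mul hF fun x hx y hy => ?_) (hM F)).trans (hr _)
      exact hpair x (hFB hx) y (hFB hy)
  have hC := hH.nonempty_biInter_ball hB
    ((D.isCompatible_image_prodMk hF).enclosingBalls_union (by simp) hne)
  rw [biInter_union, biInter_image, isAdmissible_iff.1 hadm] at hC
  exact ⟨r, hrd, hC⟩

def IsInvariantAdmissible (D : Diversity X) (T : X → X) (B : Set X) : Prop :=
  B.Nonempty ∧ D.IsAdmissible B ∧ MapsTo T B B

theorem Hyperconvex.exists_minimal_isInvariantAdmissible (hH : D.Hyperconvex) (hB : D.Bounded)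
    {T : X → X} {A : Set X} (hA : D.IsInvariantAdmissible T A) :
    ∃ B ⊆ A, Minimal (D.IsInvariantAdmissible T) B :=
  zorn_superset_nonempty {B | D.IsInvariantAdmissible T B} (fun 𝒞 h𝒞 hc hne =>
    ⟨⋂₀ 𝒞, ⟨hH.nonempty_sInter_of_isChain hB hc hne (fun _ hB => (h𝒞 hB).2.1)
        (fun _ hB => (h𝒞 hB).1), IsAdmissible.sInter fun _ hB => (h𝒞 hB).2.1,
        fun _ hx => mem_sInter.2 fun B hB => (h𝒞 hB).2.2 (hx B hB)⟩,
      fun _ hB => sInter_subset_of_mem hB⟩) A hA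

section Minimal

variable {T : X → X} {B : Set X} (hmin : Minimal (D.IsInvariantAdmissible T) B)
include hmin

lemma subset_ball_of_mapsTo {c : X} {r : ℝ} (h : MapsTo T B (D.ball c r)) : B ⊆ D.ball c r := by
  obtain ⟨⟨b, hb⟩, hadm, hT⟩ := hmin.1
  have hinv : D.IsInvariantAdmissible T (B ∩ D.ball c r) :=
    ⟨⟨T b, hT hb, h hb⟩, hadm.inter (isAdmissible_ball c r), fun x hx => ⟨hT hx.1, h hx.1⟩⟩
  exact (hmin.le_of_le hinv inter_subset_left).trans inter_subset_right

lemma mapsTo_inter_biInter_ball (hT : ∀ x ∈ B, ∀ y ∈ B, D.delta {T x, T y} ≤ D.delta {x, y})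
    (r : ℝ) : MapsTo T (B ∩ ⋂ x ∈ B, D.ball x r) (B ∩ ⋂ x ∈ B, D.ball x r) := by
  rintro y ⟨hyB, hy⟩
  have hTB : MapsTo T B (D.ball (T y) r) := fun x hx =>
    (hT y hyB x hx).trans (D.mem_ball_comm.1 (mem_iInter₂.1 hy x hx))
  exact ⟨hmin.1.2.2 hyB,
    mem_iInter₂.2 fun x hx => D.mem_ball_comm.1 (subset_ball_of_mapsTo hmin hTB hx)⟩

end Minimal

theorem Hyperconvex.subsingleton_of_minimal (hH : D.Hyperconvex) (hB : D.Bounded) {T : X → X}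
    {B : Set X} (hmin : Minimal (D.IsInvariantAdmissible T) B)
    (hT : ∀ x ∈ B, ∀ y ∈ B, D.delta {T x, T y} ≤ D.delta {x, y}) : B.Subsingleton := by
  by_contra hns
  obtain ⟨x₀, hx₀, y₀, hy₀, hxy⟩ := not_subsingleton_iff.1 hns
  obtain ⟨M, -, hM⟩ := id hB
  set S := image2 (fun x y => D.delta {x, y}) B B
  have hpair : ∀ x ∈ B, ∀ y ∈ B, D.delta {x, y} ≤ sSup S := fun x hx y hy =>
    le_csSup ⟨M, forall_mem_image2.2 fun _ _ _ _ => hM _⟩ (mem_image2_of_mem hx hy)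
  have hd : 0 < sSup S :=
    ((D.nonneg _).lt_of_ne (Ne.symm (D.delta_pair_eq_zero_iff.not.2 hxy))).trans_le
      (hpair x₀ hx₀ y₀ hy₀)
  obtain ⟨r, hrd, hC⟩ := hH.exists_lt_nonempty_inter_biInter_ball hB hmin.1.2.1 hmin.1.1 hd hpair
  have hBC : B ⊆ B ∩ ⋂ x ∈ B, D.ball x r := hmin.le_of_le
    ⟨hC, hmin.1.2.1.inter (IsAdmissible.biInter fun x _ => isAdmissible_ball x r),
      mapsTo_inter_biInter_ball hmin hT r⟩ inter_subset_left
  have hSr : sSup S ≤ r := csSup_le (hmin.1.1.image2 hmin.1.1) <|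
    forall_mem_image2.2 fun x hx y hy => mem_iInter₂.1 (hBC hy).2 x hx
  linarith

end Diversity

/-- Let `(X, δ)` be a bounded hyperconvex diversity with induced
metric `d(x,y) = δ {x,y}`. Then every nonempty admissible subset `A` of `(X, d)` has the
fixed point property for nonexpansive self-mappings: every `T : A → A` nonexpansive
with respect to `d` has a fixed point in `A`. -/
theorem admissible_fixed_point_property
    {X : Type*} [DecidableEq X] (D : Diversity X)
    (hH : D.Hyperconvex) (hB : D.Bounded)
    (A : Set X) (hAne : A.Nonempty) (hAadm : D.IsAdmissible A)
    (T : X → X) (hTA : ∀ x ∈ A, T x ∈ A)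
    (hT : ∀ x ∈ A, ∀ y ∈ A, D.delta {T x, T y} ≤ D.delta {x, y}) :
    ∃ x ∈ A, T x = x := by
  obtain ⟨B, hBA, hmin⟩ := hH.exists_minimal_isInvariantAdmissible hB ⟨hAne, hAadm, hTA⟩
  have hsub : B.Subsingleton :=
    hH.subsingleton_of_minimal hB hmin fun x hx y hy => hT x (hBA hx) y (hBA hy)
  obtain ⟨b, hb⟩ := hmin.1.1
  exact ⟨b, hBA hb, hsub (hmin.1.2.2 hb) hb⟩
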